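/- Mutual information does not decrease under classical flagging of an ensemble: let (p_ℓ)_{ℓ=1}^m be a probability vector, let ρ_ℓ be density matrices on the finite-dimensional composite system X⊗Y, let R be an m-dimensional system with orthonormal basis (|ℓ⟩), and let ρ = ∑_ℓ p_ℓ |ℓ⟩⟨ℓ|_R ⊗ (ρ_ℓ)_{XY}. Then I(XR; Y)_ρ ≥ ∑_ℓ p_ℓ · I(X;Y)_{ρ_ℓ}. -/

import Mathlib

open Matrix
open scoped ComplexOrder

noncomputable section

/-- von Neumann entropy `S(ρ) = −Tr(ρ log ρ)`, computed as `∑ −λ log λ` over the eigenvalues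
of a Hermitian matrix. -/
noncomputable def vnEntropy {n : Type*} [Fintype n] [DecidableEq n] (ρ : Matrix n n ℂ) : ℝ :=
  if h : ρ.IsHermitian then ∑ i, Real.negMulLog (h.eigenvalues i) else 0

/-- A density matrix: positive semidefinite with unit trace. -/
def IsDensityMatrix {n : Type*} [Fintype n] (ρ : Matrix n n ℂ) : Prop :=
  ρ.PosSemidef ∧ ρ.trace = 1

/-- Marginal on the first tensor factor. -/
def margFst {α γ : Type} [Fintype γ] (ρ : Matrix (α × γ) (α × γ) ℂ) : Matrix α α ℂ :=
  Matrix.of fun a a' => ∑ c, ρ (a, c) (a', c)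

/-- Marginal on the second tensor factor. -/
def margSnd {α γ : Type} [Fintype α] (ρ : Matrix (α × γ) (α × γ) ℂ) : Matrix γ γ ℂ :=
  Matrix.of fun c c' => ∑ a, ρ (a, c) (a, c')

/-- Mutual information `I(X;Y) = S(X) + S(Y) − S(XY)` of a bipartite state. -/
noncomputable def mutualInfo {α γ : Type} [Fintype α] [DecidableEq α] [Fintype γ] [DecidableEq γ]
    (ρ : Matrix (α × γ) (α × γ) ℂ) : ℝ :=
  vnEntropy (margFst ρ) + vnEntropy (margSnd ρ) - vnEntropy ρ

/-- The classically flagged state `∑ ℓ, p ℓ • |ℓ⟩⟨ℓ|_R ⊗ (ρs ℓ)_{XY}` on `(X ⊗ R) ⊗ Y`,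
where `R = Fin m` carries the orthonormal flag basis. -/
def flaggedState {X Y : Type} {m : ℕ} (p : Fin m → ℝ)
    (ρs : Fin m → Matrix (X × Y) (X × Y) ℂ) :
    Matrix ((X × Fin m) × Y) ((X × Fin m) × Y) ℂ :=
  Matrix.of fun a b =>
    if a.1.2 = b.1.2 then (p a.1.2 : ℂ) * ρs a.1.2 (a.1.1, a.2) (b.1.1, b.2) else 0

/-!
Flagging is block diagonal on `XR` and on `XRY`, so there the entropy obeys the classical-quantum
chain rule `S(∑ p_ℓ |ℓ⟩⟨ℓ| ⊗ σ_ℓ) = ∑ p_ℓ S(σ_ℓ) + H(p)`, read off from the characteristic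
polynomial. The Shannon terms `H(p)` cancel in `I(XR;Y) = S(XR) + S(Y) - S(XRY)`, and what remains
is concavity of the entropy on the `Y`-marginal `∑ p_ℓ ρ_ℓ^Y`. Concavity is proved in the
eigenbasis of the mixture: there `S` of the mixture is `∑_i η(∑_ℓ p_ℓ d_{ℓi})` with `d_{ℓi}` the
diagonal entries of `σ_ℓ`, Jensen for `η = negMulLog` moves the average outside, and the diagonal
of any state has at least the entropy of its spectrum.
-/

open Polynomial

namespace Matrix

theorem charpoly_blockDiagonal {n o R : Type*} [Fintype n] [DecidableEq n] [Fintype o]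
    [DecidableEq o] [CommRing R] (M : o → Matrix n n R) :
    (blockDiagonal M).charpoly = ∏ k, (M k).charpoly := by
  simp only [charpoly]
  rw [← det_blockDiagonal]
  congr 1
  ext ⟨i, k⟩ ⟨j, k'⟩
  by_cases hk : k = k' <;> by_cases hij : i = j <;> simp [blockDiagonal_apply, *]

theorem sum_normSq_apply_of_mem_unitaryGroup {n : Type*} [Fintype n] [DecidableEq n]
    {U : Matrix n n ℂ} (hU : U ∈ unitaryGroup n ℂ) (i : n) :
    ∑ j, Complex.normSq (U i j) = 1 := by
  have h : (U * star U) i i = 1 := by rw [Unitary.mul_star_self_of_mem hU, one_apply_eq]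
  simp only [mul_apply, star_apply, RCLike.star_def, Complex.mul_conj] at h
  exact_mod_cast h

end Matrix

section vnEntropy

variable {n : Type*} [Fintype n] [DecidableEq n]

theorem vnEntropy_eq_sum_roots_charpoly {A : Matrix n n ℂ} (hA : A.IsHermitian) :
    vnEntropy A = (A.charpoly.roots.map fun z => Real.negMulLog z.re).sum := by
  rw [vnEntropy, dif_pos hA, hA.roots_charpoly_eq_eigenvalues, Multiset.map_map,
    Finset.sum_eq_multiset_sum]
  simp

theorem vnEntropy_eq_sum_of_charpoly_eq {ι : Type*} [Fintype ι] {A : Matrix n n ℂ}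
    (hA : A.IsHermitian) (d : ι → ℝ) (h : A.charpoly = ∏ i, (X - C (d i : ℂ))) :
    vnEntropy A = ∑ i, Real.negMulLog (d i) := by
  have hprod : ∏ i, (X - C (d i : ℂ)) =
      ((Finset.univ.val.map fun i => (d i : ℂ)).map fun z => X - C z).prod := by
    rw [Multiset.map_map]; rfl
  rw [vnEntropy_eq_sum_roots_charpoly hA, h, hprod, roots_multiset_prod_X_sub_C, Multiset.map_map,
    Finset.sum_eq_multiset_sum]
  simp

theorem vnEntropy_reindex {n' : Type*} [Fintype n'] [DecidableEq n'] (e : n ≃ n')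
    (A : Matrix n n ℂ) : vnEntropy (reindex e e A) = vnEntropy A := by
  by_cases hA : A.IsHermitian
  · rw [vnEntropy_eq_sum_roots_charpoly hA, vnEntropy_eq_sum_roots_charpoly (hA.reindex e),
      charpoly_reindex]
  · rw [vnEntropy, vnEntropy, dif_neg hA, dif_neg (mt (isHermitian_reindex_iff e).mp hA)]

theorem vnEntropy_blockDiagonal {o : Type*} [Fintype o] [DecidableEq o]
    {M : o → Matrix n n ℂ} (hM : ∀ k, (M k).IsHermitian) :
    vnEntropy (blockDiagonal M) = ∑ k, vnEntropy (M k) := by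
  have hH : (blockDiagonal M).IsHermitian := isHermitian_blockDiagonal_iff.mpr hM
  rw [vnEntropy_eq_sum_of_charpoly_eq hH (fun q : o × n => (hM q.1).eigenvalues q.2)
    (by simp_rw [charpoly_blockDiagonal, (hM _).charpoly_eq, Fintype.prod_prod_type]; rfl),
    Fintype.sum_prod_type]
  simp [vnEntropy, hM]

theorem vnEntropy_star_mul_mul_of_mem_unitaryGroup {A U : Matrix n n ℂ} (hA : A.IsHermitian)
    (hU : U ∈ unitaryGroup n ℂ) :
    vnEntropy (star U * A * U) = vnEntropy A := by
  have hconj : (star U * A * U).IsHermitian := by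
    rw [star_eq_conjTranspose]; exact isHermitian_conjTranspose_mul_mul U hA
  rw [vnEntropy_eq_sum_roots_charpoly hA, vnEntropy_eq_sum_roots_charpoly hconj, Matrix.mul_assoc,
    charpoly_mul_comm, Matrix.mul_assoc, Unitary.mul_star_self_of_mem hU, Matrix.mul_one]

theorem vnEntropy_smul_of_trace_eq_one {A : Matrix n n ℂ} (hA : A.IsHermitian)
    (htr : A.trace = 1) (c : ℝ) :
    vnEntropy (c • A) = c * vnEntropy A + Real.negMulLog c := by
  have hsum : ∑ i, hA.eigenvalues i = 1 := by
    have h := hA.trace_eq_sum_eigenvalues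
    rw [htr] at h
    exact Complex.ofReal_injective (by simpa using h.symm)
  have hcfc : cfc (c * ·) A = c • A := cfc_const_mul_id c A hA.isSelfAdjoint
  rw [vnEntropy_eq_sum_of_charpoly_eq (hA.smul (IsSelfAdjoint.all c)) _
    (hcfc ▸ hA.charpoly_cfc_eq (c * ·))]
  simp only [Algebra.algebraMap_self, RingHom.id_apply, Real.negMulLog_mul, Finset.sum_add_distrib,
    ← Finset.sum_mul, ← Finset.mul_sum, hsum, vnEntropy, dif_pos hA]
  ring

theorem vnEntropy_blockDiagonal_smul {o : Type*} [Fintype o] [DecidableEq o] (p : o → ℝ)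
    {σ : o → Matrix n n ℂ} (hσ : ∀ k, (σ k).IsHermitian) (htr : ∀ k, (σ k).trace = 1) :
    vnEntropy (blockDiagonal fun k => p k • σ k)
      = ∑ k, (p k * vnEntropy (σ k) + Real.negMulLog (p k)) := by
  rw [vnEntropy_blockDiagonal fun k => (hσ k).smul (IsSelfAdjoint.all (p k))]
  exact Finset.sum_congr rfl fun k _ => vnEntropy_smul_of_trace_eq_one (hσ k) (htr k) (p k)

theorem vnEntropy_le_sum_negMulLog_diag {A : Matrix n n ℂ} (hA : A.PosSemidef) :
    vnEntropy A ≤ ∑ i, Real.negMulLog (A i i).re := by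
  set U : Matrix n n ℂ := (hA.1.eigenvectorUnitary : Matrix n n ℂ)
  have hU : U ∈ unitaryGroup n ℂ := hA.1.eigenvectorUnitary.2
  -- `w` is doubly stochastic and `A i i = ∑ j, w i j * λ j`, so Jensen applies row by row.
  set w : n → n → ℝ := fun i j => Complex.normSq (U i j)
  have hrow : ∀ i, ∑ j, w i j = 1 := sum_normSq_apply_of_mem_unitaryGroup hU
  have hcol : ∀ j, ∑ i, w i j = 1 := fun j => by
    simpa [w] using sum_normSq_apply_of_mem_unitaryGroup (Unitary.star_mem hU) j
  have hdiag : ∀ i, (A i i).re = ∑ j, w i j * hA.1.eigenvalues j := fun i => by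
    conv_lhs => rw [hA.1.spectral_theorem, Unitary.conjStarAlgAut_apply]
    rw [mul_apply, Complex.re_sum]
    refine Finset.sum_congr rfl fun j _ => ?_
    rw [mul_diagonal, star_apply, mul_right_comm]
    simp [w, U, Complex.mul_conj]
  rw [vnEntropy, dif_pos hA.1]
  calc ∑ j, Real.negMulLog (hA.1.eigenvalues j)
      = ∑ i, ∑ j, w i j * Real.negMulLog (hA.1.eigenvalues j) := by
        rw [Finset.sum_comm]; simp_rw [← Finset.sum_mul, hcol, one_mul]
    _ ≤ ∑ i, Real.negMulLog (A i i).re := Finset.sum_le_sum fun i _ => by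
        rw [hdiag]
        exact Real.concaveOn_negMulLog.le_map_sum (fun j _ => Complex.normSq_nonneg _) (hrow i)
          fun j _ => hA.eigenvalues_nonneg j

theorem sum_mul_vnEntropy_le_vnEntropy_sum_smul {ι : Type*} [Fintype ι] {p : ι → ℝ}
    (hp : ∀ k, 0 ≤ p k) (hp1 : ∑ k, p k = 1) {σ : ι → Matrix n n ℂ}
    (hσ : ∀ k, (σ k).PosSemidef) :
    ∑ k, p k * vnEntropy (σ k) ≤ vnEntropy (∑ k, p k • σ k) := by
  set ρ := ∑ k, p k • σ k
  have hρ : ρ.IsHermitian :=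
    (posSemidef_sum Finset.univ fun k _ => (hσ k).smul (hp k)).1
  set U : Matrix n n ℂ := (hρ.eigenvectorUnitary : Matrix n n ℂ)
  have hU : U ∈ unitaryGroup n ℂ := hρ.eigenvectorUnitary.2
  have hσU : ∀ k, (star U * σ k * U).PosSemidef := fun k => by
    simpa [star_eq_conjTranspose] using (hσ k).conjTranspose_mul_mul_same U
  set d : ι → n → ℝ := fun k i => ((star U * σ k * U) i i).re
  have hdiagonal : star U * ρ * U = diagonal (Complex.ofReal ∘ hρ.eigenvalues) := by
    have h := hρ.conjStarAlgAut_star_eigenvectorUnitary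
    rwa [Unitary.conjStarAlgAut_apply, Unitary.coe_star, star_star] at h
  have heig : ∀ i, hρ.eigenvalues i = ∑ k, p k * d k i := fun i => by
    have h := congrArg (fun M => (M i i).re) hdiagonal
    simp only [ρ, Finset.mul_sum, Finset.sum_mul, mul_smul_comm, smul_mul_assoc, Matrix.sum_apply,
      Matrix.smul_apply, Complex.re_sum, Complex.real_smul, Complex.re_ofReal_mul] at h
    simpa [d] using h.symm
  calc ∑ k, p k * vnEntropy (σ k)
      = ∑ k, p k * vnEntropy (star U * σ k * U) := by
        simp_rw [vnEntropy_star_mul_mul_of_mem_unitaryGroup (hσ _).1 hU]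
    _ ≤ ∑ k, p k * ∑ i, Real.negMulLog (d k i) := by
        gcongr with k
        · exact hp k
        · exact vnEntropy_le_sum_negMulLog_diag (hσU k)
    _ = ∑ i, ∑ k, p k * Real.negMulLog (d k i) := by
        simp_rw [Finset.mul_sum]; exact Finset.sum_comm
    _ ≤ ∑ i, Real.negMulLog (∑ k, p k * d k i) := Finset.sum_le_sum fun i _ =>
        Real.concaveOn_negMulLog.le_map_sum (fun k _ => hp k) hp1
          fun k _ => (Complex.nonneg_iff.mp (hσU k).diag_nonneg).1
    _ = vnEntropy ρ := by simp [vnEntropy, hρ, heig]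

end vnEntropy

section Marginals

variable {α γ : Type}

theorem margFst_eq_sum_submatrix [Fintype γ] (ρ : Matrix (α × γ) (α × γ) ℂ) :
    margFst ρ = ∑ c, ρ.submatrix (·, c) (·, c) := by
  ext a a'
  simp [margFst, Matrix.sum_apply]

theorem margSnd_eq_sum_submatrix [Fintype α] (ρ : Matrix (α × γ) (α × γ) ℂ) :
    margSnd ρ = ∑ a, ρ.submatrix (a, ·) (a, ·) := by
  ext c c'
  simp [margSnd, Matrix.sum_apply]

theorem IsDensityMatrix.margFst [Fintype α] [Fintype γ] {ρ : Matrix (α × γ) (α × γ) ℂ}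
    (hρ : IsDensityMatrix ρ) : IsDensityMatrix (margFst ρ) := by
  refine ⟨?_, ?_⟩
  · rw [margFst_eq_sum_submatrix]
    exact posSemidef_sum _ fun c _ => hρ.1.submatrix _
  · rw [← hρ.2, trace, trace, Fintype.sum_prod_type]
    rfl

theorem IsDensityMatrix.margSnd [Fintype α] [Fintype γ] {ρ : Matrix (α × γ) (α × γ) ℂ}
    (hρ : IsDensityMatrix ρ) : IsDensityMatrix (margSnd ρ) := by
  refine ⟨?_, ?_⟩
  · rw [margSnd_eq_sum_submatrix]
    exact posSemidef_sum _ fun a _ => hρ.1.submatrix _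
  · rw [← hρ.2, trace, trace, Fintype.sum_prod_type_right]
    rfl

end Marginals

def prodRightComm (α β γ : Type*) : (α × β) × γ ≃ (α × γ) × β where
  toFun q := ((q.1.1, q.2), q.1.2)
  invFun q := ((q.1.1, q.2), q.1.2)
  left_inv _ := rfl
  right_inv _ := rfl

section Flagging

variable {X Y : Type} {m : ℕ} (p : Fin m → ℝ) (ρs : Fin m → Matrix (X × Y) (X × Y) ℂ)

theorem flaggedState_eq_reindex_blockDiagonal :
    flaggedState p ρs = reindex (prodRightComm X Y (Fin m)) (prodRightComm X Y (Fin m))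
      (blockDiagonal fun ℓ => p ℓ • ρs ℓ) := by
  ext ⟨⟨x, ℓ⟩, y⟩ ⟨⟨x', ℓ'⟩, y'⟩
  rcases eq_or_ne ℓ ℓ' with rfl | h
  · simp [flaggedState, prodRightComm, blockDiagonal_apply]
  · simp [flaggedState, prodRightComm, blockDiagonal_apply, h]

theorem margFst_flaggedState [Fintype Y] :
    margFst (flaggedState p ρs) = blockDiagonal fun ℓ => p ℓ • margFst (ρs ℓ) := by
  ext ⟨x, ℓ⟩ ⟨x', ℓ'⟩
  rcases eq_or_ne ℓ ℓ' with rfl | h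
  · simp [margFst, flaggedState, blockDiagonal_apply, Finset.mul_sum]
  · simp [margFst, flaggedState, blockDiagonal_apply, h]

theorem margSnd_flaggedState [Fintype X] :
    margSnd (flaggedState p ρs) = ∑ ℓ, p ℓ • margSnd (ρs ℓ) := by
  ext y y'
  simp only [margSnd, flaggedState, of_apply, ↓reduceIte, Fintype.sum_prod_type, smul_of,
    Matrix.sum_apply, Pi.smul_apply, Complex.real_smul, Finset.mul_sum]
  exact Finset.sum_comm

end Flagging

/-- **Statement 7.** Mutual information does not decrease under classical flagging of an
ensemble: `I(XR;Y)_ρ ≥ ∑ ℓ, p ℓ · I(X;Y)_{ρ_ℓ}` for `ρ = ∑ ℓ, p ℓ • |ℓ⟩⟨ℓ|_R ⊗ ρ_ℓ`. -/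
theorem flagged_mutual_info_ge {X Y : Type} [Fintype X] [DecidableEq X]
    [Fintype Y] [DecidableEq Y] {m : ℕ} (p : Fin m → ℝ)
    (hp : ∀ ℓ, 0 ≤ p ℓ) (hp1 : ∑ ℓ, p ℓ = 1)
    (ρs : Fin m → Matrix (X × Y) (X × Y) ℂ) (hρs : ∀ ℓ, IsDensityMatrix (ρs ℓ)) :
    ∑ ℓ, p ℓ * mutualInfo (ρs ℓ) ≤ mutualInfo (flaggedState p ρs) := by
  have hXRY : vnEntropy (flaggedState p ρs)
      = ∑ ℓ, (p ℓ * vnEntropy (ρs ℓ) + Real.negMulLog (p ℓ)) := by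
    rw [flaggedState_eq_reindex_blockDiagonal, vnEntropy_reindex,
      vnEntropy_blockDiagonal_smul p (fun ℓ => (hρs ℓ).1.1) fun ℓ => (hρs ℓ).2]
  have hXR : vnEntropy (margFst (flaggedState p ρs))
      = ∑ ℓ, (p ℓ * vnEntropy (margFst (ρs ℓ)) + Real.negMulLog (p ℓ)) := by
    rw [margFst_flaggedState, vnEntropy_blockDiagonal_smul p (fun ℓ => (hρs ℓ).margFst.1.1)
      fun ℓ => (hρs ℓ).margFst.2]
  have hY : ∑ ℓ, p ℓ * vnEntropy (margSnd (ρs ℓ)) ≤ vnEntropy (margSnd (flaggedState p ρs)) := by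
    rw [margSnd_flaggedState]
    exact sum_mul_vnEntropy_le_vnEntropy_sum_smul hp hp1 fun ℓ => (hρs ℓ).margSnd.1
  simp only [mutualInfo, hXRY, hXR, mul_sub, mul_add, Finset.sum_add_distrib,
    Finset.sum_sub_distrib]
  linarith
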